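/- arXiv:1812.08408 — 3 statements merged into one kernel-verified Lean document; each statement's English description precedes it below -/
import Mathlib

section
/- Let A be a real symmetric n × n matrix with nonnegative entries and zero diagonal. If trace(A^{2k+1}) = 0 for every integer k ≥ 0, then the graph represented by A is bipartite: there exists a function f : {1, ..., n} → {0, 1} such that A_{i,j} ≠ 0 implies f(i) ≠ f(j). -/
open Matrix

/-- if `A` is a real symmetric matrix with nonnegative entries and
zero diagonal such that `trace (A^(2k+1)) = 0` for all `k ≥ 0`, then the graph
with adjacency matrix `A` is bipartite: its vertices can be 2-colored so that
every edge joins vertices of different colors. -/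
theorem odd_trace_zero_implies_bipartite (n : ℕ)
    (A : Matrix (Fin n) (Fin n) ℝ)
    (hsymm : Aᵀ = A)
    (hnonneg : ∀ i j, 0 ≤ A i j)
    (hdiag : ∀ i, A i i = 0)
    (htrace : ∀ k : ℕ, (A ^ (2 * k + 1)).trace = 0) :
    ∃ f : Fin n → Fin 2, ∀ i j, A i j ≠ 0 → f i ≠ f j := by
  classical
  set G : SimpleGraph (Fin n) :=
    { Adj := fun i j => A i j ≠ 0
      symm := by
        constructor
        intro i j h
        have := congrFun (congrFun hsymm j) i
        simp only [Matrix.transpose_apply] at this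
        rwa [← this]
      loopless := by constructor; intro i h; exact h (hdiag i) } with hG
  -- powers have nonneg entries
  have hpw : ∀ m : ℕ, ∀ i j : Fin n, 0 ≤ (A ^ m) i j := by
    intro m
    induction m with
    | zero =>
      intro i j
      simp only [pow_zero]
      by_cases h : i = j
      · subst h; simp [Matrix.one_apply]
      · simp [Matrix.one_apply, h]
    | succ m ih =>
      intro i j
      rw [pow_succ', Matrix.mul_apply]
      exact Finset.sum_nonneg fun k _ => mul_nonneg (hnonneg i k) (ih k j)
  -- a walk gives a positive entry
  have hwalk : ∀ (i j : Fin n) (p : G.Walk i j), 0 < (A ^ p.length) i j := by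
    intro i j p
    induction p with
    | nil => simp [Matrix.one_apply]
    | @cons u v w h q ih =>
      rw [SimpleGraph.Walk.length_cons, pow_succ', Matrix.mul_apply]
      have hA : A u v ≠ 0 := h
      have hterm : 0 < A u v * (A ^ q.length) v w :=
        mul_pos (lt_of_le_of_ne (hnonneg u v) (Ne.symm hA)) ih
      exact Finset.sum_pos' (fun k _ => mul_nonneg (hnonneg u k) (hpw q.length k w))
        ⟨v, Finset.mem_univ v, hterm⟩
  -- every closed walk has even length
  have heven : ∀ (i : Fin n) (p : G.Walk i i), Even p.length := by
    intro i p
    by_contra hodd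
    rw [Nat.not_even_iff_odd] at hodd
    obtain ⟨k, hk⟩ := hodd
    have hpos : 0 < (A ^ (2 * k + 1)).trace := by
      rw [Matrix.trace]
      exact Finset.sum_pos' (fun j _ => hpw _ j j)
        ⟨i, Finset.mem_univ i, by rw [← hk]; exact hwalk i i p⟩
    exact absurd (htrace k) (ne_of_gt hpos)
  -- construct the coloring
  have hreach : ∀ i : Fin n, G.Reachable (G.connectedComponentMk i).out i := by
    intro i
    exact SimpleGraph.ConnectedComponent.exact ((G.connectedComponentMk i).out_eq)
  let p : ∀ i : Fin n, G.Walk (G.connectedComponentMk i).out i :=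
    fun i => (hreach i).some
  refine ⟨fun i => if Odd (p i).length then 1 else 0, ?_⟩
  intro i j hAij
  have hadj : G.Adj i j := hAij
  have hcomp : G.connectedComponentMk i = G.connectedComponentMk j :=
    SimpleGraph.ConnectedComponent.sound hadj.reachable
  have hr : (G.connectedComponentMk j).out = (G.connectedComponentMk i).out := by
    rw [hcomp]
  -- closed walk at the common root
  let q : G.Walk (G.connectedComponentMk i).out j := (p j).copy hr rfl
  let w : G.Walk (G.connectedComponentMk i).out (G.connectedComponentMk i).out :=
    ((p i).append (SimpleGraph.Walk.cons hadj q.reverse))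
  have hw : Even w.length := heven _ w
  have hlen : w.length = (p i).length + (1 + (p j).length) := by
    simp [w, q, SimpleGraph.Walk.length_append, SimpleGraph.Walk.length_cons,
      SimpleGraph.Walk.length_reverse, SimpleGraph.Walk.length_copy]
    omega
  rw [hlen] at hw
  have hpar : ¬ (Odd (p i).length ↔ Odd (p j).length) := by
    rw [Nat.even_iff] at hw
    rw [Nat.odd_iff, Nat.odd_iff]
    omega
  by_cases h1 : Odd (p i).length
  · have h2 : ¬ Odd (p j).length := fun hh => hpar (iff_of_true h1 hh)
    simp [h1, h2]
  · have h2 : Odd (p j).length := by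
      by_contra h2
      exact hpar (iff_of_false h1 h2)
    simp [h1, h2]
end

section
/- Let n = n1 + n2 with n1 ≥ n2 ≥ 1 and let α_1 ≥ α_2 ≥ ... ≥ α_n be a nonincreasing sequence of real numbers. Define β_j = (α_j - α_{n-j+1})/2 for j = 1, ..., n2; β_j = 0 for j = n2+1, ..., n1; and β_j = -β_{n-j+1} for j = n1+1, ..., n. Then the sequence (β_j) is nonincreasing, satisfies β_{n-j+1} = -β_j for all j and β_j = 0 for n2 < j ≤ n1, and for every real sequence (γ_j)_{j=1}^n satisfying γ_{n-j+1} = -γ_j for all j and γ_j = 0 for n2 < j ≤ n1, one has Σ_{j=1}^n (α_j - β_j)^2 ≤ Σ_{j=1}^n (α_j - γ_j)^2. -/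
/-- Proposition 3 of the paper: with `n = n1 + n2`, `n1 ≥ n2 ≥ 1`,
and a nonincreasing sequence `α_1 ≥ … ≥ α_n`, the sequence
`β_j = (α_j - α_{n-j+1})/2` for `1 ≤ j ≤ n2`, `β_j = 0` for `n2 < j ≤ n1`,
`β_j = -β_{n-j+1}` for `n1 < j ≤ n`, is nonincreasing, consists of `n1 - n2`
zeros and entries in `±` pairs, and is the closest such sequence to `α` in the
least-squares sense. -/
theorem closest_pm_pair_sequence (n1 n2 n : ℕ) (hn : n = n1 + n2)
    (hn2 : 1 ≤ n2) (h12 : n2 ≤ n1)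
    (α : ℕ → ℝ) (hα : ∀ j, 1 ≤ j → j < n → α (j + 1) ≤ α j)
    (β : ℕ → ℝ)
    (hβ1 : ∀ j, 1 ≤ j → j ≤ n2 → β j = (α j - α (n - j + 1)) / 2)
    (hβ2 : ∀ j, n2 < j → j ≤ n1 → β j = 0)
    (hβ3 : ∀ j, n1 < j → j ≤ n → β j = -β (n - j + 1)) :
    (∀ j, 1 ≤ j → j < n → β (j + 1) ≤ β j) ∧
    (∀ j, 1 ≤ j → j ≤ n → β (n - j + 1) = -β j) ∧
    (∀ j, n2 < j → j ≤ n1 → β j = 0) ∧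
    (∀ γ : ℕ → ℝ,
      (∀ j, 1 ≤ j → j ≤ n → γ (n - j + 1) = -γ j) →
      (∀ j, n2 < j → j ≤ n1 → γ j = 0) →
      ∑ j ∈ Finset.Icc 1 n, (α j - β j) ^ 2 ≤
        ∑ j ∈ Finset.Icc 1 n, (α j - γ j) ^ 2) := by
  -- the sequence α is antitone on [1, n]
  have habs : ∀ j k, 1 ≤ j → j ≤ k → k ≤ n → α k ≤ α j := by
    intro j k hj
    induction k with
    | zero => intro h1 h2; omega
    | succ m ih =>
      intro h1 h2
      rcases eq_or_lt_of_le h1 with h | h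
      · exact le_of_eq (by rw [h])
      · exact (hα m (by omega) (by omega)).trans (ih (by omega) (by omega))
  -- symmetry of β
  have part2 : ∀ j, 1 ≤ j → j ≤ n → β (n - j + 1) = -β j := by
    intro j hj hjn
    rcases le_or_gt j n2 with h | h
    · have e : n - (n - j + 1) + 1 = j := by omega
      rw [hβ3 (n - j + 1) (by omega) (by omega), e]
    · rcases le_or_gt j n1 with h' | h'
      · rw [hβ2 j h h', hβ2 (n - j + 1) (by omega) (by omega)]; ring
      · rw [hβ3 j h' hjn, neg_neg]
  -- monotonicity of β
  have part1 : ∀ j, 1 ≤ j → j < n → β (j + 1) ≤ β j := by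
    intro j hj hjn
    rcases le_or_gt (j + 1) n2 with h1 | h1
    · rw [hβ1 j hj (by omega), hβ1 (j + 1) (by omega) h1]
      have e1 : α (j + 1) ≤ α j := hα j hj hjn
      have e2 : α (n - j + 1) ≤ α (n - (j + 1) + 1) := by
        have e : n - (j + 1) + 1 + 1 = n - j + 1 := by omega
        rw [← e]
        exact hα _ (by omega) (by omega)
      linarith
    · rcases le_or_gt (j + 1) n1 with h2 | h2
      · rcases le_or_gt j n2 with h3 | h3
        · -- j = n2
          rw [hβ2 (j + 1) h1 h2, hβ1 j hj h3]
          have : α (n - j + 1) ≤ α j := habs j (n - j + 1) hj (by omega) (by omega)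
          linarith
        · rw [hβ2 (j + 1) (by omega) h2, hβ2 j h3 (by omega)]
      · rcases le_or_gt j n2 with h3 | h3
        · -- j = n2 = n1
          have hj2 : j = n2 := by omega
          have hj1 : n1 = n2 := by omega
          have e : n - (j + 1) + 1 = j := by omega
          rw [hβ3 (j + 1) h2 (by omega), e, hβ1 j hj h3]
          have e2 : n - j + 1 = j + 1 := by omega
          rw [e2]
          have : α (j + 1) ≤ α j := hα j hj hjn
          linarith
        · rcases le_or_gt j n1 with h4 | h4
          · -- j = n1
            have e : n - (j + 1) + 1 = n2 := by omega
            rw [hβ2 j h3 h4, hβ3 (j + 1) h2 (by omega), e, hβ1 n2 hn2 le_rfl]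
            have : α (n - n2 + 1) ≤ α n2 := habs n2 (n - n2 + 1) hn2 (by omega) (by omega)
            linarith
          · -- n1 < j < n
            have hk1 : 1 ≤ n - j := by omega
            have hk2 : n - j + 1 ≤ n2 := by omega
            have e1 : n - (j + 1) + 1 = n - j := by omega
            rw [hβ3 j h4 (by omega), hβ3 (j + 1) (by omega) (by omega), e1,
              hβ1 (n - j) hk1 (by omega), hβ1 (n - j + 1) (by omega) hk2]
            have e2 : n - (n - j) + 1 = j + 1 := by omega
            have e3 : n - (n - j + 1) + 1 = j := by omega
            rw [e2, e3]
            have a1 : α (j + 1) ≤ α j := hα j (by omega) hjn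
            have a2 : α (n - j + 1) ≤ α (n - j) := by
              have e : n - j + 1 = (n - j) + 1 := rfl
              rw [e]
              exact hα (n - j) hk1 (by omega)
            linarith
  refine ⟨part1, part2, hβ2, ?_⟩
  intro γ hγ1 hγ2
  have hsplit : ∀ g : ℕ → ℝ, ∑ j ∈ Finset.Icc 1 n, g j
      = (∑ j ∈ Finset.Icc 1 n2, (g j + g (n - j + 1))) + ∑ j ∈ Finset.Icc (n2 + 1) n1, g j := by
    intro g
    have h1 : ∑ j ∈ Finset.Ioc 0 n1, g j + ∑ j ∈ Finset.Ioc n1 n, g j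
        = ∑ j ∈ Finset.Ioc 0 n, g j :=
      Finset.sum_Ioc_consecutive _ (by omega) (by omega)
    have h2 : ∑ j ∈ Finset.Ioc 0 n2, g j + ∑ j ∈ Finset.Ioc n2 n1, g j
        = ∑ j ∈ Finset.Ioc 0 n1, g j :=
      Finset.sum_Ioc_consecutive _ (by omega) (by omega)
    have h3 : ∑ j ∈ Finset.Ioc n1 n, g j = ∑ j ∈ Finset.Ioc 0 n2, g (n - j + 1) := by
      refine Finset.sum_nbij' (fun j => n - j + 1) (fun j => n - j + 1) ?_ ?_ ?_ ?_ ?_ <;>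
        intro a ha <;> simp only [Finset.mem_Ioc] at *
      · omega
      · omega
      · omega
      · omega
      · congr 1
        omega
    have e1 : Finset.Icc 1 n = Finset.Ioc 0 n := Finset.Icc_add_one_left_eq_Ioc 0 n
    have e2 : Finset.Icc 1 n2 = Finset.Ioc 0 n2 := Finset.Icc_add_one_left_eq_Ioc 0 n2
    have e3 : Finset.Icc (n2 + 1) n1 = Finset.Ioc n2 n1 := Finset.Icc_add_one_left_eq_Ioc n2 n1
    rw [e1, e2, e3, Finset.sum_add_distrib]
    linarith
  rw [hsplit, hsplit]
  have hmid : ∑ j ∈ Finset.Icc (n2 + 1) n1, (α j - β j) ^ 2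
      = ∑ j ∈ Finset.Icc (n2 + 1) n1, (α j - γ j) ^ 2 := by
    refine Finset.sum_congr rfl fun j hj => ?_
    simp only [Finset.mem_Icc] at hj
    rw [hβ2 j (by omega) hj.2, hγ2 j (by omega) hj.2]
  have hpair : ∑ j ∈ Finset.Icc 1 n2, ((α j - β j) ^ 2 + (α (n - j + 1) - β (n - j + 1)) ^ 2)
      ≤ ∑ j ∈ Finset.Icc 1 n2, ((α j - γ j) ^ 2 + (α (n - j + 1) - γ (n - j + 1)) ^ 2) := by
    refine Finset.sum_le_sum fun j hj => ?_
    simp only [Finset.mem_Icc] at hj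
    rw [part2 j hj.1 (by omega), hγ1 j hj.1 (by omega), hβ1 j hj.1 hj.2]
    nlinarith [sq_nonneg (γ j - (α j - α (n - j + 1)) / 2)]
  linarith
end

section
/- The matrix exponential of A_B satisfies trace(exp(-A_B)) = trace(exp(A_B)); consequently, the spectral bipartivity index b_s = trace(exp(-A_B))/trace(exp(A_B)) of the bipartite graph with adjacency matrix A_B equals 1. -/
open Matrix

/-- for the adjacency matrix `A_B` of a bipartite graph,
`trace(exp(-A_B)) = trace(exp(A_B))`, so the spectral bipartivity index
`b_s = trace(exp(-A_B))/trace(exp(A_B))` equals `1`. -/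
theorem bipartivity_index_one (n1 n2 : ℕ) (hn1 : 0 < n1) (hn2 : 0 < n2)
    (C : Matrix (Fin n1) (Fin n2) ℝ)
    (A_B : Matrix (Fin n1 ⊕ Fin n2) (Fin n1 ⊕ Fin n2) ℝ)
    (hA : A_B = Matrix.fromBlocks 0 C Cᵀ 0) :
    (NormedSpace.exp (-A_B)).trace = (NormedSpace.exp A_B).trace ∧
      (NormedSpace.exp (-A_B)).trace / (NormedSpace.exp A_B).trace = 1 := by
  set D : Matrix (Fin n1 ⊕ Fin n2) (Fin n1 ⊕ Fin n2) ℝ :=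
    Matrix.fromBlocks 1 0 0 (-1) with hD
  have hDD : D * D = 1 := by
    simp [hD, Matrix.fromBlocks_multiply, ← Matrix.fromBlocks_one]
  have hDunit : IsUnit D := ⟨⟨D, D, hDD, hDD⟩, rfl⟩
  have hDinv : D⁻¹ = D := Matrix.inv_eq_right_inv hDD
  have hconj : D * A_B * D⁻¹ = -A_B := by
    rw [hDinv, hA]
    simp [hD, Matrix.fromBlocks_multiply, Matrix.fromBlocks_neg]
  -- trace equality
  have h1 : (NormedSpace.exp (-A_B)).trace = (NormedSpace.exp A_B).trace := by
    rw [← hconj, Matrix.exp_conj D A_B hDunit, Matrix.trace_mul_cycle, hDinv, hDD, one_mul]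
  refine ⟨h1, ?_⟩
  rw [h1, div_self]
  -- trace is nonzero
  have hsymm : A_Bᵀ = A_B := by rw [hA]; simp [Matrix.fromBlocks_transpose]
  set E := NormedSpace.exp ((2:ℝ)⁻¹ • A_B) with hE
  have hEt : Eᵀ = E := by
    rw [hE, ← Matrix.exp_transpose, Matrix.transpose_smul, hsymm]
  have hEE : NormedSpace.exp A_B = Eᵀ * E := by
    rw [hEt, hE, ← Matrix.exp_add_of_commute _ _ (Commute.refl _)]
    congr 1
    rw [← add_smul]
    norm_num
  have hEunit : IsUnit E := Matrix.isUnit_exp _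
  have hEne : E ≠ 0 := by
    intro h0
    have h1' : (1 : Matrix (Fin n1 ⊕ Fin n2) (Fin n1 ⊕ Fin n2) ℝ) = 0 := by
      obtain ⟨u, hu⟩ := hEunit
      have hmul : E * (↑u⁻¹ : Matrix _ _ ℝ) = 1 := by
        rw [← hu]; exact u.mul_inv
      rw [h0, zero_mul] at hmul
      exact hmul.symm
    have := congrFun (congrFun h1' (Sum.inl ⟨0, hn1⟩)) (Sum.inl ⟨0, hn1⟩)
    simp [Matrix.one_apply] at this
  -- trace (Eᵀ * E) = ∑ squares > 0
  have htr : (NormedSpace.exp A_B).trace = ∑ i, ∑ j, (E j i)^2 := by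
    rw [hEE, Matrix.trace]
    simp [Matrix.diag, Matrix.mul_apply, Matrix.transpose_apply, sq]
  rw [htr]
  have hpos : 0 < ∑ i, ∑ j, (E j i)^2 := by
    obtain ⟨j, i, hij⟩ : ∃ j i, E j i ≠ 0 := by
      by_contra h
      push_neg at h
      exact hEne (by ext j i; exact h j i)
    refine Finset.sum_pos' (fun a _ => Finset.sum_nonneg fun b _ => sq_nonneg _)
      ⟨i, Finset.mem_univ _, ?_⟩
    refine Finset.sum_pos' (fun b _ => sq_nonneg _) ⟨j, Finset.mem_univ _, ?_⟩
    exact lt_of_le_of_ne (sq_nonneg _) (Ne.symm (pow_ne_zero 2 hij))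
  exact hpos.ne'
end
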